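/- 5π²/48 − (log 2)²/4 = Re Li₂((1/2)·e^{πi/2}) − 2·Re Li₂((1/√2)·e^{3πi/4}). -/

import Mathlib

noncomputable def Li (s : ℕ) (z : ℂ) : ℂ := ∑' k : ℕ, z ^ (k + 1) / ((k : ℂ) + 1) ^ s

noncomputable def LiR (s : ℕ) (x : ℝ) : ℝ := ∑' k : ℕ, x ^ (k + 1) / ((k : ℝ) + 1) ^ s

/-!
Put `w = (1 + i)/2`. Then `w² = i/2` is the first point and `-w̄ = (-1 + i)/2` the second.
The duplication formula `Li₂(w) + Li₂(-w) = Li₂(w²)/2`, together with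
`Re Li₂(-w̄) = Re Li₂(-w)`, turns the right-hand side into `2 Re Li₂(w)`.
Since `1 - w = w̄`, Euler's reflection formula `Li₂(z) + Li₂(1 - z) + log z log(1 - z) = π²/6`
at `z = w` reads `2 Re Li₂(w) + |log w|² = π²/6`, and `log w = -(log 2)/2 + iπ/4`.
The reflection formula holds on the lens `|z| < 1, |1 - z| < 1`: its left-hand side has
derivative zero there, because `Li₂'(z) = -log(1 - z)/z`, and it tends to `π²/6` as `z → 0⁺`.
-/

open Complex Filter Metric Set Topology ComplexConjugate
open scoped Real

section Polylog

variable {s : ℕ} {z : ℂ}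

lemma norm_Li_term_le (hz : ‖z‖ ≤ 1) (k : ℕ) :
    ‖z ^ (k + 1) / ((k : ℂ) + 1) ^ s‖ ≤ 1 / ((k : ℝ) + 1) ^ s := by
  have hk : ‖(k : ℂ) + 1‖ = (k : ℝ) + 1 := by exact_mod_cast norm_natCast (k + 1)
  rw [norm_div, norm_pow, norm_pow, hk]
  gcongr
  exact pow_le_one₀ (norm_nonneg z) hz

lemma summable_one_div_nat_add_one_pow (hs : 2 ≤ s) :
    Summable fun k : ℕ => 1 / ((k : ℝ) + 1) ^ s := by
  exact_mod_cast (summable_nat_add_iff 1).mpr (Real.summable_one_div_nat_pow.mpr hs)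

lemma summable_Li (hs : 2 ≤ s) (hz : ‖z‖ ≤ 1) :
    Summable fun k : ℕ => z ^ (k + 1) / ((k : ℂ) + 1) ^ s :=
  .of_norm_bounded (summable_one_div_nat_add_one_pow hs) (norm_Li_term_le hz)

lemma continuousOn_Li (hs : 2 ≤ s) : ContinuousOn (Li s) (closedBall 0 1) :=
  continuousOn_tsum (fun k => (continuous_pow (k + 1)).div_const _ |>.continuousOn)
    (summable_one_div_nat_add_one_pow hs)
    (fun k w hw => norm_Li_term_le (by simpa using hw) k)

lemma Li_zero : Li s 0 = 0 := by
  simp [Li]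

lemma Li_two_one : Li 2 1 = (π ^ 2 / 6 : ℝ) := by
  have h : HasSum (fun k : ℕ => 1 / ((k : ℝ) + 1) ^ 2) (π ^ 2 / 6) := by
    simpa using (hasSum_nat_add_iff' 1).mpr hasSum_zeta_two
  rw [Li, ← (hasSum_ofReal.mpr h).tsum_eq]
  simp

lemma Li_one (hz : ‖z‖ < 1) : Li 1 z = -log (1 - z) := by
  simpa [Li] using (hasSum_taylorSeries_neg_log' hz).tsum_eq

lemma Li_conj (s : ℕ) (z : ℂ) : Li s (conj z) = conj (Li s z) := by
  simp [Li, conj_tsum, map_div₀]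

lemma re_Li_neg_conj (s : ℕ) (z : ℂ) : (Li s (-conj z)).re = (Li s (-z)).re := by
  rw [← map_neg, Li_conj, conj_re]

lemma hasDerivAt_Li_succ (hz₀ : z ≠ 0) (hz : ‖z‖ < 1) :
    HasDerivAt (Li (s + 1)) (Li s z / z) z := by
  obtain ⟨r, hzr, hr1⟩ := exists_between hz
  have hr0 : 0 < r := (norm_nonneg z).trans_lt hzr
  have hterm (k : ℕ) (w : ℂ) : HasDerivAt (fun w => w ^ (k + 1) / ((k : ℂ) + 1) ^ (s + 1))
      (w ^ k / ((k : ℂ) + 1) ^ s) w := by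
    refine ((hasDerivAt_pow (k + 1) w).div_const _).congr_deriv ?_
    have : (k : ℂ) + 1 ≠ 0 := Nat.cast_add_one_ne_zero k
    rw [add_tsub_cancel_right, Nat.cast_add_one]
    field_simp
    ring
  have hbound (k : ℕ) (w : ℂ) (hw : w ∈ ball 0 r) : ‖w ^ k / ((k : ℂ) + 1) ^ s‖ ≤ r ^ k := by
    have hk : 1 ≤ ‖(k : ℂ) + 1‖ := by
      rw [← Nat.cast_add_one, Complex.norm_natCast]
      simp
    rw [norm_div, norm_pow, norm_pow]
    calc ‖w‖ ^ k / ‖(k : ℂ) + 1‖ ^ s ≤ ‖w‖ ^ k := div_le_self (by positivity) (one_le_pow₀ hk)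
      _ ≤ r ^ k := by gcongr; exact (mem_ball_zero_iff.mp hw).le
  have hLi : Li s z / z = ∑' k : ℕ, z ^ k / ((k : ℂ) + 1) ^ s := by
    rw [div_eq_iff hz₀, Li, mul_comm, ← tsum_mul_left]
    simp only [pow_succ', mul_div_assoc]
  rw [hLi]
  exact hasDerivAt_tsum_of_isPreconnected (summable_geometric_of_lt_one hr0.le hr1)
    isOpen_ball (convex_ball 0 r).isPreconnected (fun k w _ => hterm k w) hbound
    (mem_ball_self hr0) (by simp) (mem_ball_zero_iff.mpr hzr)

lemma Li_add_Li_neg (hz : Summable fun k : ℕ => z ^ (k + 1) / ((k : ℂ) + 1) ^ s) :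
    Li s z + Li s (-z) = 2 / 2 ^ s * Li s (z ^ 2) := by
  have hz' : Summable fun k : ℕ => (-z) ^ (k + 1) / ((k : ℂ) + 1) ^ s :=
    summable_norm_iff.mp (by simpa [norm_div, norm_pow] using summable_norm_iff.mpr hz)
  have hodd (m : ℕ) : z ^ (2 * m + 1 + 1) / ((↑(2 * m + 1) : ℂ) + 1) ^ s +
      (-z) ^ (2 * m + 1 + 1) / ((↑(2 * m + 1) : ℂ) + 1) ^ s =
      2 / 2 ^ s * ((z ^ 2) ^ (m + 1) / ((m : ℂ) + 1) ^ s) := by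
    have : (m : ℂ) + 1 ≠ 0 := Nat.cast_add_one_ne_zero m
    have h2m : ((↑(2 * m + 1) : ℂ) + 1) = 2 * ((m : ℂ) + 1) := by push_cast; ring
    rw [show 2 * m + 1 + 1 = 2 * (m + 1) by ring, pow_mul, pow_mul, neg_sq, h2m, mul_pow]
    field_simp
    ring
  have heven (k : ℕ) (hk : k ∉ range fun m => 2 * m + 1) :
      z ^ (k + 1) / ((k : ℂ) + 1) ^ s + (-z) ^ (k + 1) / ((k : ℂ) + 1) ^ s = 0 := by
    obtain ⟨m, rfl⟩ : Even k := Nat.not_odd_iff_even.mp fun ⟨m, hm⟩ => hk ⟨m, hm.symm⟩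
    rw [(Even.add_one ⟨m, rfl⟩).neg_pow]
    ring
  have hsum := hz.hasSum.add hz'.hasSum
  rw [← Function.Injective.hasSum_iff (fun a b h => by simpa using h) heven] at hsum
  simp only [Function.comp_def, hodd] at hsum
  rw [Li, Li, Li, ← hsum.tsum_eq, tsum_mul_left]

lemma re_pos_of_norm_one_sub_lt_one (hz : ‖1 - z‖ < 1) : 0 < z.re := by
  have := (abs_re_le_norm (1 - z)).trans_lt hz
  rw [sub_re, one_re] at this
  linarith [(abs_lt.mp this).2]

lemma norm_one_sub_ofReal {x : ℝ} (hx : x ≤ 1) : ‖1 - (x : ℂ)‖ = 1 - x := by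
  rw [← ofReal_one, ← ofReal_sub, norm_real, Real.norm_of_nonneg (by linarith)]

lemma hasDerivAt_Li_two_reflection (hz : ‖z‖ < 1) (hz' : ‖1 - z‖ < 1) :
    HasDerivAt (fun w => Li 2 w + Li 2 (1 - w) + log w * log (1 - w)) 0 z := by
  have hre : 0 < z.re := re_pos_of_norm_one_sub_lt_one hz'
  have hre' : 0 < (1 - z).re := re_pos_of_norm_one_sub_lt_one (by simpa using hz)
  have hz₀ : z ≠ 0 := fun h => by simp [h] at hre
  have hz₁ : 1 - z ≠ 0 := fun h => by simp [h] at hre'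
  have hsub : HasDerivAt (fun w : ℂ => 1 - w) (-1) z := (hasDerivAt_id z).const_sub 1
  have hLi := hasDerivAt_Li_succ (s := 1) hz₀ hz
  have hLi' := (hasDerivAt_Li_succ (s := 1) hz₁ hz').comp z hsub
  have hlog := hasDerivAt_log (Or.inl hre : z ∈ slitPlane)
  have hlog' := (hasDerivAt_log (Or.inl hre' : 1 - z ∈ slitPlane)).comp z hsub
  refine ((hLi.add hLi').add (hlog.mul hlog')).congr_deriv ?_
  rw [Li_one hz, Li_one hz', sub_sub_cancel, Function.comp_apply]
  field_simp
  ring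

lemma tendsto_Li_two_reflection_nhdsGT_zero :
    Tendsto (fun x : ℝ => Li 2 x + Li 2 (1 - x) + log x * log (1 - x)) (𝓝[>] 0)
      (𝓝 (π ^ 2 / 6 : ℝ)) := by
  have hx : ∀ᶠ x : ℝ in 𝓝[>] 0, x ∈ Ioo 0 (1 / 2) := Ioo_mem_nhdsGT (by norm_num)
  have hcoe : Tendsto (fun x : ℝ => (x : ℂ)) (𝓝[>] 0) (𝓝 0) :=
    (continuous_ofReal.tendsto' 0 0 ofReal_zero).mono_left nhdsWithin_le_nhds
  have hLi : Tendsto (fun x : ℝ => Li 2 x) (𝓝[>] 0) (𝓝 0) := by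
    refine Li_zero (s := 2) ▸ (continuousOn_Li le_rfl 0 (by simp)).tendsto.comp ?_
    refine tendsto_nhdsWithin_iff.mpr ⟨hcoe, hx.mono fun x hx => ?_⟩
    rw [mem_closedBall_zero_iff, norm_real, Real.norm_of_nonneg hx.1.le]
    linarith [hx.2]
  have hLi' : Tendsto (fun x : ℝ => Li 2 (1 - x)) (𝓝[>] 0) (𝓝 (π ^ 2 / 6 : ℝ)) := by
    refine Li_two_one ▸ (continuousOn_Li le_rfl 1 (by simp)).tendsto.comp ?_
    refine tendsto_nhdsWithin_iff.mpr ⟨by simpa using hcoe.const_sub 1, hx.mono fun x hx => ?_⟩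
    rw [mem_closedBall_zero_iff, norm_one_sub_ofReal (by linarith [hx.2])]
    linarith [hx.1]
  have hlog : Tendsto (fun x : ℝ => log x * log (1 - x)) (𝓝[>] 0) (𝓝 0) := by
    have hbound : Tendsto (fun x : ℝ => 3 / 2 * ‖x * Real.log x‖) (𝓝[>] 0) (𝓝 0) := by
      simpa using ((Real.continuous_mul_log.tendsto 0).norm.const_mul (3 / 2)).mono_left
        nhdsWithin_le_nhds
    refine squeeze_zero_norm' (hx.mono fun x hx => ?_) hbound
    have h1 : ‖log (1 - (x : ℂ))‖ ≤ 3 / 2 * x := by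
      simpa [sub_eq_add_neg, abs_of_pos hx.1] using
        norm_log_one_add_half_le_self (z := -x) (by simpa [abs_of_pos hx.1] using hx.2.le)
    rw [norm_mul, ← ofReal_log hx.1.le, norm_real, norm_mul, Real.norm_of_nonneg hx.1.le]
    nlinarith [norm_nonneg (Real.log x), norm_nonneg (log (1 - (x : ℂ)))]
  simpa using (hLi.add hLi').add hlog

theorem Li_two_reflection (hz : ‖z‖ < 1) (hz' : ‖1 - z‖ < 1) :
    Li 2 z + Li 2 (1 - z) + log z * log (1 - z) = (π ^ 2 / 6 : ℝ) := by
  set F := fun w => Li 2 w + Li 2 (1 - w) + log w * log (1 - w)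
  set U : Set ℂ := {w | ‖w‖ < 1 ∧ ‖1 - w‖ < 1}
  have hU : U = ball 0 1 ∩ ball 1 1 := by
    ext w
    simp [U, dist_eq_norm, norm_sub_rev]
  have hF (w : ℂ) (hw : w ∈ U) : HasDerivAt F 0 w := hasDerivAt_Li_two_reflection hw.1 hw.2
  have hconst {w : ℂ} (hw : w ∈ U) : F w = F z :=
    (hU ▸ isOpen_ball.inter isOpen_ball : IsOpen U).is_const_of_deriv_eq_zero
      (hU ▸ (convex_ball 0 1).inter (convex_ball 1 1) : Convex ℝ U).isPreconnected
      (fun w hw => (hF w hw).differentiableAt.differentiableWithinAt)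
      (fun w hw => (hF w hw).deriv) hw ⟨hz, hz'⟩
  refine tendsto_nhds_unique (tendsto_const_nhds.congr' ?_)
    tendsto_Li_two_reflection_nhdsGT_zero
  filter_upwards [Ioo_mem_nhdsGT (by norm_num : (0 : ℝ) < 1)] with x hx
  refine (hconst ⟨?_, ?_⟩).symm
  · simpa [abs_of_pos hx.1] using hx.2
  · rw [norm_one_sub_ofReal hx.2.le]
    linarith [hx.1]

end Polylog

lemma one_add_I_div_two_eq_exp : (1 + I) / 2 = exp (↑(-(Real.log 2 / 2)) + ↑(π / 4) * I) := by
  rw [exp_add, exp_mul_I, ← ofReal_exp, ← ofReal_cos, ← ofReal_sin, Real.cos_pi_div_four,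
    Real.sin_pi_div_four, Real.exp_neg, Real.exp_half, Real.exp_log two_pos]
  have h0 : (Real.sqrt 2 : ℂ) ≠ 0 := by norm_cast; positivity
  push_cast
  field_simp

lemma conj_one_add_I_div_two : conj ((1 + I) / 2) = (1 - I) / 2 := by
  rw [map_div₀, map_add, map_one, conj_I, map_ofNat, sub_eq_add_neg]

lemma one_sub_one_add_I_div_two : 1 - (1 + I) / 2 = conj ((1 + I) / 2) := by
  rw [conj_one_add_I_div_two]
  ring

lemma norm_one_add_I_div_two_lt_one : ‖(1 + I) / 2‖ < 1 := by
  rw [one_add_I_div_two_eq_exp, norm_exp, add_re, ofReal_re, re_ofReal_mul, I_re, mul_zero,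
    add_zero, Real.exp_lt_one_iff, neg_lt_zero]
  exact half_pos (Real.log_pos one_lt_two)

lemma log_one_add_I_div_two : log ((1 + I) / 2) = ↑(-(Real.log 2 / 2)) + ↑(π / 4) * I := by
  have h : (↑(-(Real.log 2 / 2)) + ↑(π / 4) * I).im = π / 4 := by
    rw [add_im, ofReal_im, im_ofReal_mul, I_im, mul_one, zero_add]
  rw [one_add_I_div_two_eq_exp, log_exp] <;> rw [h] <;> linarith [Real.pi_pos]

lemma log_conj_one_add_I_div_two : log (conj ((1 + I) / 2)) = conj (log ((1 + I) / 2)) := by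
  refine log_conj _ ?_
  rw [← log_im, log_one_add_I_div_two, add_im, ofReal_im, im_ofReal_mul, I_im, mul_one, zero_add]
  linarith [Real.pi_pos]

lemma re_Li_two_one_add_I_div_two :
    (Li 2 ((1 + I) / 2)).re = 5 * π ^ 2 / 96 - Real.log 2 ^ 2 / 8 := by
  have h := congrArg re (Li_two_reflection norm_one_add_I_div_two_lt_one
    (one_sub_one_add_I_div_two ▸ (RCLike.norm_conj _).trans_lt norm_one_add_I_div_two_lt_one))
  rw [one_sub_one_add_I_div_two, Li_conj, log_conj_one_add_I_div_two, mul_conj,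
    log_one_add_I_div_two, normSq_add_mul_I] at h
  simp only [add_re, conj_re, ofReal_re] at h
  linarith

lemma ofReal_half_mul_exp_pi_div_two_mul_I :
    ((1 / 2 : ℝ) : ℂ) * exp (π / 2 * I) = ((1 + I) / 2) ^ 2 := by
  rw [exp_pi_div_two_mul_I]
  push_cast
  linear_combination (-1 / 4 : ℂ) * I_sq

lemma ofReal_inv_sqrt_two_mul_exp_three_pi_div_four_mul_I :
    ((1 / Real.sqrt 2 : ℝ) : ℂ) * exp (3 * π / 4 * I) = -conj ((1 + I) / 2) := by
  rw [show (3 * π / 4 : ℂ) = ↑(π - π / 4) by push_cast; ring, exp_mul_I, ← ofReal_cos,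
    ← ofReal_sin, Real.cos_pi_sub, Real.sin_pi_sub, Real.cos_pi_div_four, Real.sin_pi_div_four,
    conj_one_add_I_div_two]
  have h0 : (Real.sqrt 2 : ℂ) ≠ 0 := by norm_cast; positivity
  push_cast
  field_simp
  ring

theorem stmt9 : 5 * Real.pi ^ 2 / 48 - (Real.log 2) ^ 2 / 4 = (Li 2 (((1/2 : ℝ) : ℂ) * Complex.exp ((Real.pi / 2) * Complex.I))).re - 2 * (Li 2 (((1 / Real.sqrt 2 : ℝ) : ℂ) * Complex.exp ((3 * Real.pi / 4) * Complex.I))).re := by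
  rw [ofReal_half_mul_exp_pi_div_two_mul_I, ofReal_inv_sqrt_two_mul_exp_three_pi_div_four_mul_I,
    re_Li_neg_conj]
  have hdup : Li 2 (((1 + I) / 2) ^ 2) = 2 * (Li 2 ((1 + I) / 2) + Li 2 (-((1 + I) / 2))) := by
    rw [Li_add_Li_neg (summable_Li le_rfl norm_one_add_I_div_two_lt_one.le)]
    ring
  rw [hdup, mul_re, add_re, re_Li_two_one_add_I_div_two]
  simp only [re_ofNat, im_ofNat, zero_mul, sub_zero]
  ring
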